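/- Let H be a real symmetric positive-semidefinite n×n matrix, μ ≥ 0, and let Ω ⊆ ℝ^n be an open convex set. Let B : Ω → ℝ be differentiable and convex on Ω. Let θ_0, …, θ_N ∈ ℝ^n and suppose for each k that U_k ∈ Ω minimizes u ↦ (1/2)⟨u, Hu⟩ − ⟨θ_k, u⟩ + μB(u) over Ω. Then, with indices taken cyclically (θ_{N+1} = θ_0), ∑_{k=0}^{N} ⟨U_k, θ_k − θ_{k+1}⟩ ≥ 0; that is, the barrier-MPC map is cyclically monotone. -/

import Mathlib

open RealInnerProductSpace

/-! Rockafellar's argument: if `U k` minimizes `f u - ⟪θ k, u⟫`, then testing the minimality of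
`U (σ k)` against the competitor `U k` bounds `⟪θ (σ k), U k⟫`, and summing over `k` the values
`f (U k)` cancel along the permutation `σ`. -/

theorem sum_inner_sub_perm_nonneg_of_isMinOn {E ι : Type*} [NormedAddCommGroup E]
    [InnerProductSpace ℝ E] [Fintype ι] (σ : Equiv.Perm ι) (f : E → ℝ) (S : Set E)
    (θ U : ι → E) (hU : ∀ k, U k ∈ S) (hmin : ∀ k, IsMinOn (fun u => f u - ⟪θ k, u⟫) S (U k)) :
    0 ≤ ∑ k, ⟪U k, θ k - θ (σ k)⟫ := by
  have hstep : ∀ k, ⟪U k, θ (σ k)⟫ ≤ f (U k) - f (U (σ k)) + ⟪U (σ k), θ (σ k)⟫ := fun k => by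
    have := isMinOn_iff.1 (hmin (σ k)) (U k) (hU k)
    rw [real_inner_comm _ (U k), real_inner_comm _ (U (σ k))]
    linarith
  have hsum := Finset.sum_le_sum fun k (_ : k ∈ Finset.univ) => hstep k
  rw [Finset.sum_add_distrib, Finset.sum_sub_distrib, Equiv.sum_comp σ (fun k => f (U k)),
    Equiv.sum_comp σ (fun k => ⟪U k, θ k⟫), sub_self, zero_add] at hsum
  simp only [inner_sub_right, Finset.sum_sub_distrib]
  linarith

theorem barrierMPC_cyclically_monotone {n N : ℕ}
    (H : Matrix (Fin n) (Fin n) ℝ)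
    (μ : ℝ)
    (Ω : Set (EuclideanSpace ℝ (Fin n)))
    (B : EuclideanSpace ℝ (Fin n) → ℝ)
    (θ : Fin (N + 1) → EuclideanSpace ℝ (Fin n))
    (U : Fin (N + 1) → EuclideanSpace ℝ (Fin n))
    (hU : ∀ k, U k ∈ Ω)
    (hmin : ∀ k, ∀ u ∈ Ω,
      (1 / 2) * ⟪U k, Matrix.toEuclideanLin H (U k)⟫ - ⟪θ k, U k⟫ + μ * B (U k) ≤
        (1 / 2) * ⟪u, Matrix.toEuclideanLin H u⟫ - ⟪θ k, u⟫ + μ * B u) :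
    0 ≤ ∑ k : Fin (N + 1), ⟪U k, θ k - θ (k + 1)⟫ :=
  sum_inner_sub_perm_nonneg_of_isMinOn (Equiv.addRight 1)
    (fun u => (1 / 2) * ⟪u, Matrix.toEuclideanLin H u⟫ + μ * B u) Ω θ U hU
    fun k => isMinOn_iff.2 fun u hu => by linarith [hmin k u hu]
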